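/- arXiv:1606.03437 — 6 statements merged into one kernel-verified Lean document; each statement's English description precedes it below -/
import Mathlib

section
/- Let S be a symmetric positive definite n×n real matrix, H an n×p real matrix, and ε > 0 a real number. If the p×p matrix ε⁻¹·I − Hᵀ S H is positive definite, then the n×n matrix S⁻¹ − ε·H Hᵀ is positive definite (in particular, it is invertible). -/
/-!
Both `S⁻¹ - H (ε⁻¹ I)⁻¹ Hᵀ = S⁻¹ - ε H Hᵀ` and `ε⁻¹ I - Hᵀ (S⁻¹)⁻¹ H = ε⁻¹ I - Hᵀ S H` are Schur
complements of the symmetric block matrix `M = [[S⁻¹, H], [Hᵀ, ε⁻¹ I]]`, one for each diagonal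
block. Since `S⁻¹` is positive definite and the second complement is positive definite, `M` is
positive semidefinite and `det M = det S⁻¹ · det (ε⁻¹ I - Hᵀ S H) ≠ 0`. Hence the first complement
is positive semidefinite, and `det M = det (ε⁻¹ I) · det (S⁻¹ - ε H Hᵀ)` shows it is nonsingular,
so it is positive definite.
-/

open Matrix
open scoped ComplexOrder

namespace Matrix.PosDef

variable {𝕜 m n : Type*} [RCLike 𝕜] [Fintype m] [Fintype n] [DecidableEq m] [DecidableEq n]

theorem schur_complement₂₂_of_schur_complement₁₁ {A : Matrix m m 𝕜} (hA : A.PosDef)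
    (B : Matrix m n 𝕜) {D : Matrix n n 𝕜} (hD : D.PosDef) (hSchur : (D - Bᴴ * A⁻¹ * B).PosDef) :
    (A - B * D⁻¹ * Bᴴ).PosDef := by
  have := hA.isUnit.invertible
  have := hD.isUnit.invertible
  have hBlock : (fromBlocks A B Bᴴ D).PosSemidef :=
    (fromBlocks₁₁ B D hA).mpr hSchur.posSemidef
  have hDet : A.det * (D - Bᴴ * A⁻¹ * B).det = D.det * (A - B * D⁻¹ * Bᴴ).det := by
    simpa only [invOf_eq_nonsing_inv] using
      (det_fromBlocks₁₁ A B Bᴴ D).symm.trans (det_fromBlocks₂₂ A B Bᴴ D)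
  refine ((fromBlocks₂₂ A B hD).mp hBlock).posDef_iff_det_ne_zero.mpr fun hZero => ?_
  rw [hZero, mul_zero] at hDet
  exact mul_ne_zero hA.det_pos.ne' hSchur.det_pos.ne' hDet

end Matrix.PosDef

theorem stmt_0 {n p : ℕ}
    (S : Matrix (Fin n) (Fin n) ℝ) (H : Matrix (Fin n) (Fin p) ℝ)
    (ε : ℝ) (hε : 0 < ε)
    (hS : S.PosDef)
    (h : (ε⁻¹ • (1 : Matrix (Fin p) (Fin p) ℝ) - Hᵀ * S * H).PosDef) :
    (S⁻¹ - ε • (H * Hᵀ)).PosDef := by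
  have hD : (ε⁻¹ • (1 : Matrix (Fin p) (Fin p) ℝ)).PosDef := PosDef.one.smul (inv_pos.mpr hε)
  have hInvD : (ε⁻¹ • (1 : Matrix (Fin p) (Fin p) ℝ))⁻¹ = ε • 1 :=
    inv_eq_right_inv (by simp [smul_smul, hε.ne'])
  have hSchur := hS.inv.schur_complement₂₂_of_schur_complement₁₁ H hD <| by
    rwa [conjTranspose_eq_transpose_of_trivial, nonsing_inv_nonsing_inv S hS.det_pos.ne'.isUnit]
  simpa only [hInvD, conjTranspose_eq_transpose_of_trivial, Matrix.mul_smul, Matrix.mul_one,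
    Matrix.smul_mul] using hSchur
end

section
/- (Key quadratic matrix bound underlying Theorem 1.) Let S be a symmetric positive definite n×n real matrix, H an n×p real matrix, and ε > 0 such that S⁻¹ − ε·H Hᵀ is positive definite, and set X = (S⁻¹ − ε·H Hᵀ)⁻¹. Then for every A ∈ ℝ^{n×n}, every E ∈ ℝ^{l×n}, and every Δ ∈ ℝ^{p×l} such that I − Δᵀ Δ is positive semidefinite, the matrix Aᵀ X A + ε⁻¹·Eᵀ E − (A + H Δ E)ᵀ S (A + H Δ E) is positive semidefinite. -/
/-!
Put `T = A + H Δ E`, `Y = S T` and `P = S⁻¹ - ε H Hᵀ = X⁻¹`. Since `S` is symmetric,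
`Tᵀ S T = Yᵀ T + Tᵀ Y - Yᵀ S⁻¹ Y`, and splitting `S⁻¹ = P + ε H Hᵀ` and `T = A + H (Δ E)` writes
this as the sum of two cross terms `Yᵀ A + Aᵀ Y - Yᵀ P Y` and
`Zᵀ W + Wᵀ Z - ε Zᵀ Z` (with `Z = Hᵀ Y`, `W = Δ E`). Completing the square bounds them in the
Loewner order by `Aᵀ X A` and `ε⁻¹ Wᵀ W`, and `Wᵀ W ≤ Eᵀ E` because `‖Δ‖₂ ≤ 1`.
-/

open Matrix
open scoped MatrixOrder

namespace Matrix

variable {m n : Type*} [Fintype m] [Fintype n]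

theorem PosDef.transpose_mul_add_sub_le_inv [DecidableEq n] {P : Matrix n n ℝ} (hP : P.PosDef)
    (Y A : Matrix n m ℝ) : Yᵀ * A + Aᵀ * Y - Yᵀ * P * Y ≤ Aᵀ * P⁻¹ * A := by
  have hPt : Pᵀ = P := hP.isHermitian
  have hP' : IsUnit P.det := (isUnit_iff_isUnit_det P).mp hP.isUnit
  have hsq : Aᵀ * P⁻¹ * A - (Yᵀ * A + Aᵀ * Y - Yᵀ * P * Y)
      = (P * Y - A)ᵀ * P⁻¹ * (P * Y - A) := by
    simp only [transpose_sub, transpose_mul, hPt, Matrix.sub_mul, Matrix.mul_sub,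
      Matrix.mul_assoc, nonsing_inv_mul_cancel_left _ _ hP', mul_nonsing_inv_cancel_left _ _ hP']
    abel
  rw [le_iff, hsq]
  simpa using hP.inv.posSemidef.conjTranspose_mul_mul_same (P * Y - A)

theorem transpose_mul_add_sub_smul_le_inv_smul {ε : ℝ} (hε : 0 < ε) (Z W : Matrix n m ℝ) :
    Zᵀ * W + Wᵀ * Z - ε • (Zᵀ * Z) ≤ ε⁻¹ • (Wᵀ * W) := by
  have hsq : ε⁻¹ • (Wᵀ * W) - (Zᵀ * W + Wᵀ * Z - ε • (Zᵀ * Z))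
      = ε⁻¹ • ((ε • Z - W)ᵀ * (ε • Z - W)) := by
    simp only [transpose_sub, transpose_smul, Matrix.sub_mul, Matrix.mul_sub, Matrix.smul_mul,
      Matrix.mul_smul, smul_sub, smul_smul, inv_mul_cancel₀ hε.ne',
      inv_mul_cancel_left₀ hε.ne']
    module
  rw [le_iff, hsq]
  exact (posSemidef_conjTranspose_mul_self _).smul (inv_nonneg.mpr hε.le)

theorem transpose_mul_le_of_transpose_mul_self_le_one {l : Type*} [Fintype l] [DecidableEq l]
    {Δ : Matrix m l ℝ} (hΔ : Δᵀ * Δ ≤ 1) (E : Matrix l n ℝ) :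
    (Δ * E)ᵀ * (Δ * E) ≤ Eᵀ * E := by
  rw [le_iff] at hΔ ⊢
  simpa [Matrix.mul_sub, Matrix.sub_mul, Matrix.mul_assoc] using hΔ.conjTranspose_mul_mul_same E

end Matrix

theorem stmt_2 {n p l : ℕ}
    (S : Matrix (Fin n) (Fin n) ℝ) (H : Matrix (Fin n) (Fin p) ℝ)
    (ε : ℝ) (hε : 0 < ε)
    (hS : S.PosDef)
    (h : (S⁻¹ - ε • (H * Hᵀ)).PosDef)
    (X : Matrix (Fin n) (Fin n) ℝ)
    (hX : X = (S⁻¹ - ε • (H * Hᵀ))⁻¹) :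
    ∀ (A : Matrix (Fin n) (Fin n) ℝ) (E : Matrix (Fin l) (Fin n) ℝ)
      (Δ : Matrix (Fin p) (Fin l) ℝ),
      ((1 : Matrix (Fin l) (Fin l) ℝ) - Δᵀ * Δ).PosSemidef →
      (Aᵀ * X * A + ε⁻¹ • (Eᵀ * E)
        - (A + H * Δ * E)ᵀ * S * (A + H * Δ * E)).PosSemidef := by
  intro A E Δ hΔ
  set T := A + H * Δ * E
  set Y := S * T
  have hSt : Sᵀ = S := hS.isHermitian
  have hS' : IsUnit S.det := (isUnit_iff_isUnit_det S).mp hS.isUnit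
  have hsplit : Tᵀ * S * T = (Yᵀ * A + Aᵀ * Y - Yᵀ * (S⁻¹ - ε • (H * Hᵀ)) * Y)
      + ((Hᵀ * Y)ᵀ * (Δ * E) + (Δ * E)ᵀ * (Hᵀ * Y) - ε • ((Hᵀ * Y)ᵀ * (Hᵀ * Y))) := by
    simp only [Y, T, transpose_add, transpose_mul, hSt, transpose_transpose, Matrix.sub_mul,
      Matrix.mul_sub, Matrix.add_mul, Matrix.mul_add, Matrix.smul_mul, Matrix.mul_smul,
      Matrix.mul_assoc, nonsing_inv_mul_cancel_left _ _ hS']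
    module
  rw [← le_iff]
  calc Tᵀ * S * T = _ := hsplit
    _ ≤ Aᵀ * X * A + ε⁻¹ • ((Δ * E)ᵀ * (Δ * E)) :=
      add_le_add (hX ▸ h.transpose_mul_add_sub_le_inv Y A)
        (transpose_mul_add_sub_smul_le_inv_smul hε _ _)
    _ ≤ Aᵀ * X * A + ε⁻¹ • (Eᵀ * E) := by
      gcongr
      exact transpose_mul_le_of_transpose_mul_self_le_one hΔ E
end

section
/- (One-step Riccati construction of Theorem 1.) Let F ∈ ℝ^{n×n}, G ∈ ℝ^{n×m}, H ∈ ℝ^{n×p}, E₁ ∈ ℝ^{l×n}, E₂ ∈ ℝ^{l×m}, let Q ⪰ 0 (n×n) and R ⪰ 0 (m×m) be symmetric, and let ε > 0. Let S₊ be a symmetric positive definite n×n matrix with S₊⁻¹ − ε·H Hᵀ positive definite, set X = (S₊⁻¹ − ε·H Hᵀ)⁻¹, and assume R_ε + Gᵀ X G is positive definite, where Q_ε = Q + ε⁻¹ E₁ᵀ E₁, R_ε = R + ε⁻¹ E₂ᵀ E₂, N_ε = ε⁻¹ E₁ᵀ E₂. Define K = (R_ε + Gᵀ X G)⁻¹ (Gᵀ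 X F + N_εᵀ) and S = Fᵀ X F + Q_ε − (Fᵀ X G + N_ε)(R_ε + Gᵀ X G)⁻¹ (Fᵀ X G + N_ε)ᵀ. Then for every Δ ∈ ℝ^{p×l} with I − ΔᵀΔ positive semidefinite, the matrix S − (F − G K + H Δ (E₁ − E₂ K))ᵀ S₊ (F − G K + H Δ (E₁ − E₂ K)) − Q − Kᵀ R K is positive semidefinite. -/
/-!
With `W = R_ε + GᵀXG` the gain solves `W K = GᵀXF + N_εᵀ`, and completing the square gives
`S - Q - KᵀRK = (F - GK)ᵀ X (F - GK) + ε⁻¹ (E₁ - E₂K)ᵀ (E₁ - E₂K)`, so it remains to bound the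
perturbed closed loop `F - GK + HΔ(E₁ - E₂K)`. For `c = f + Hg` and `u = S₊c` split
`cᵀS₊c = uᵀf + (Hᵀu)ᵀg` and apply Young's inequality to both terms, weighted by
`Z = S₊⁻¹ - εHHᵀ` and by `ε`: since `uᵀZu = cᵀS₊c - ε‖Hᵀu‖²` this yields
`cᵀS₊c ≤ fᵀZ⁻¹f + ε⁻¹‖g‖²`, and `‖Δe‖ ≤ ‖e‖` finishes the proof.
-/

namespace Matrix

variable {n k l p : Type*}

lemma PosDef.transpose_eq_self {S : Matrix n n ℝ} (hS : S.PosDef) : Sᵀ = S :=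
  (isHermitian_iff_isSymm.mp hS.isHermitian).eq

theorem riccati_completing_square [Fintype n] [Fintype l] [Fintype p] {α : Type*} [CommRing α]
    (F : Matrix n k α) (G : Matrix n p α) (X : Matrix n n α) (R : Matrix p p α)
    (E₁ : Matrix l k α) (E₂ : Matrix l p α) (r : α) {K : Matrix p k α}
    (hK : (R + r • (E₂ᵀ * E₂) + Gᵀ * X * G) * K = Gᵀ * X * F + r • (E₂ᵀ * E₁)) :
    Fᵀ * X * F + r • (E₁ᵀ * E₁) - (Fᵀ * X * G + r • (E₁ᵀ * E₂)) * K - Kᵀ * R * K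
      = (F - G * K)ᵀ * X * (F - G * K) + r • ((E₁ - E₂ * K)ᵀ * (E₁ - E₂ * K)) := by
  have hzero :
      Kᵀ * ((R + r • (E₂ᵀ * E₂) + Gᵀ * X * G) * K - (Gᵀ * X * F + r • (E₂ᵀ * E₁))) = 0 := by
    rw [hK, sub_self, Matrix.mul_zero]
  rw [← sub_eq_zero, ← neg_eq_zero, neg_sub, ← hzero]
  simp only [transpose_sub, transpose_mul, Matrix.sub_mul, Matrix.mul_sub, Matrix.add_mul,
    Matrix.mul_add, Matrix.smul_mul, Matrix.mul_smul, smul_sub, Matrix.mul_assoc]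
  abel

variable [Fintype n] [Fintype k] [Fintype l] [Fintype p]

lemma dotProduct_transpose_mul_mul_mulVec {α : Type*} [CommSemiring α] (A : Matrix n k α)
    (M : Matrix n n α) (x : k → α) :
    x ⬝ᵥ (Aᵀ * M * A) *ᵥ x = (A *ᵥ x) ⬝ᵥ M *ᵥ (A *ᵥ x) := by
  rw [← mulVec_mulVec, ← mulVec_mulVec, dotProduct_mulVec, vecMul_transpose]

lemma dotProduct_transpose_mul_self_mulVec {α : Type*} [CommSemiring α] (A : Matrix n k α)
    (x : k → α) : x ⬝ᵥ (Aᵀ * A) *ᵥ x = (A *ᵥ x) ⬝ᵥ (A *ᵥ x) := by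
  rw [← mulVec_mulVec, dotProduct_mulVec, vecMul_transpose]

lemma two_mul_dotProduct_le {ε : ℝ} (hε : 0 < ε) (a g : n → ℝ) :
    2 * (a ⬝ᵥ g) ≤ ε * (a ⬝ᵥ a) + ε⁻¹ * (g ⬝ᵥ g) := by
  simp only [dotProduct, Finset.mul_sum, ← Finset.sum_add_distrib]
  refine Finset.sum_le_sum fun i _ => ?_
  have hsq : 0 ≤ ε⁻¹ * (ε * a i - g i) ^ 2 := by positivity
  have hinv : ε⁻¹ * ε = 1 := inv_mul_cancel₀ hε.ne'
  nlinarith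

lemma dotProduct_mulVec_self_le_of_posSemidef_one_sub {Δ : Matrix p l ℝ} [DecidableEq l]
    (hΔ : (1 - Δᵀ * Δ).PosSemidef) (e : l → ℝ) : (Δ *ᵥ e) ⬝ᵥ (Δ *ᵥ e) ≤ e ⬝ᵥ e := by
  have h := hΔ.dotProduct_mulVec_nonneg e
  rw [star_trivial, sub_mulVec, one_mulVec, dotProduct_sub,
    dotProduct_transpose_mul_self_mulVec] at h
  linarith

variable [DecidableEq n]

lemma two_mul_dotProduct_le_of_posDef {Z : Matrix n n ℝ} (hZ : Z.PosDef) (u f : n → ℝ) :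
    2 * (u ⬝ᵥ f) ≤ u ⬝ᵥ Z *ᵥ u + f ⬝ᵥ Z⁻¹ *ᵥ f := by
  set v := Z⁻¹ *ᵥ f
  have hZv : Z *ᵥ v = f := by
    rw [mulVec_mulVec, mul_nonsing_inv _ ((isUnit_iff_isUnit_det Z).mp hZ.isUnit), one_mulVec]
  have hsq := hZ.posSemidef.dotProduct_mulVec_nonneg (u - v)
  rw [star_trivial, mulVec_sub, hZv, dotProduct_sub, sub_dotProduct, sub_dotProduct,
    dotProduct_mulVec v, ← hZ.transpose_eq_self, vecMul_transpose, hZ.transpose_eq_self, hZv,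
    dotProduct_comm v f, dotProduct_comm f u] at hsq
  linarith

lemma dotProduct_add_mulVec_le {S : Matrix n n ℝ} {H : Matrix n p ℝ} {ε : ℝ}
    (hS : IsUnit S.det) (hε : 0 < ε) (hZ : (S⁻¹ - ε • (H * Hᵀ)).PosDef) (f : n → ℝ) (g : p → ℝ) :
    (f + H *ᵥ g) ⬝ᵥ S *ᵥ (f + H *ᵥ g) ≤ f ⬝ᵥ (S⁻¹ - ε • (H * Hᵀ))⁻¹ *ᵥ f + ε⁻¹ * (g ⬝ᵥ g) := by
  set c := f + H *ᵥ g
  set u := S *ᵥ c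
  have hSu : S⁻¹ *ᵥ u = c := by rw [mulVec_mulVec, nonsing_inv_mul _ hS, one_mulVec]
  have hu : u ⬝ᵥ c = u ⬝ᵥ f + (Hᵀ *ᵥ u) ⬝ᵥ g := by
    rw [dotProduct_add, dotProduct_mulVec, mulVec_transpose]
  have hZu : u ⬝ᵥ (S⁻¹ - ε • (H * Hᵀ)) *ᵥ u = u ⬝ᵥ c - ε * ((Hᵀ *ᵥ u) ⬝ᵥ (Hᵀ *ᵥ u)) := by
    rw [sub_mulVec, dotProduct_sub, hSu, smul_mulVec, dotProduct_smul, smul_eq_mul,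
      ← mulVec_mulVec, dotProduct_mulVec, mulVec_transpose]
  have hf := two_mul_dotProduct_le_of_posDef hZ u f
  have hg := two_mul_dotProduct_le hε (Hᵀ *ᵥ u) g
  rw [dotProduct_comm]
  linarith

theorem posSemidef_sub_transpose_mul_mul_perturbed {S : Matrix n n ℝ} {H : Matrix n p ℝ} {ε : ℝ}
    (hS : S.PosDef) (hε : 0 < ε) (hZ : (S⁻¹ - ε • (H * Hᵀ)).PosDef) [DecidableEq l]
    {Δ : Matrix p l ℝ} (hΔ : (1 - Δᵀ * Δ).PosSemidef) (A : Matrix n k ℝ) (B : Matrix l k ℝ) :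
    (Aᵀ * (S⁻¹ - ε • (H * Hᵀ))⁻¹ * A + ε⁻¹ • (Bᵀ * B)
      - (A + H * Δ * B)ᵀ * S * (A + H * Δ * B)).PosSemidef := by
  refine .of_dotProduct_mulVec_nonneg ?_ fun x => ?_
  · rw [isHermitian_iff_isSymm, IsSymm]
    simp only [transpose_sub, transpose_add, transpose_smul, transpose_mul, transpose_transpose,
      hZ.inv.transpose_eq_self, hS.transpose_eq_self, Matrix.mul_assoc]
  · have hbound := dotProduct_add_mulVec_le ((isUnit_iff_isUnit_det S).mp hS.isUnit) hε hZ
      (A *ᵥ x) (Δ *ᵥ (B *ᵥ x))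
    have hΔx := mul_le_mul_of_nonneg_left
      (dotProduct_mulVec_self_le_of_posSemidef_one_sub hΔ (B *ᵥ x)) (inv_pos.mpr hε).le
    rw [star_trivial, sub_mulVec, add_mulVec, dotProduct_sub, dotProduct_add, smul_mulVec,
      dotProduct_smul, smul_eq_mul, dotProduct_transpose_mul_mul_mulVec,
      dotProduct_transpose_mul_mul_mulVec, dotProduct_transpose_mul_self_mulVec, add_mulVec,
      ← mulVec_mulVec, ← mulVec_mulVec]
    linarith

end Matrix

open Matrix

theorem stmt_4_general {n m p l : ℕ}
    (F : Matrix (Fin n) (Fin n) ℝ) (G : Matrix (Fin n) (Fin m) ℝ)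
    (H : Matrix (Fin n) (Fin p) ℝ)
    (E₁ : Matrix (Fin l) (Fin n) ℝ) (E₂ : Matrix (Fin l) (Fin m) ℝ)
    (Q : Matrix (Fin n) (Fin n) ℝ) (R : Matrix (Fin m) (Fin m) ℝ)
    (ε : ℝ) (hε : 0 < ε)
    (Splus : Matrix (Fin n) (Fin n) ℝ) (hSplus : Splus.PosDef)
    (hXinv : (Splus⁻¹ - ε • (H * Hᵀ)).PosDef)
    (X : Matrix (Fin n) (Fin n) ℝ)
    (hX : X = (Splus⁻¹ - ε • (H * Hᵀ))⁻¹)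
    (Qε : Matrix (Fin n) (Fin n) ℝ) (hQε : Qε = Q + ε⁻¹ • (E₁ᵀ * E₁))
    (Rε : Matrix (Fin m) (Fin m) ℝ) (hRε : Rε = R + ε⁻¹ • (E₂ᵀ * E₂))
    (Nε : Matrix (Fin n) (Fin m) ℝ) (hNε : Nε = ε⁻¹ • (E₁ᵀ * E₂))
    (hRX : (Rε + Gᵀ * X * G).PosDef)
    (K : Matrix (Fin m) (Fin n) ℝ)
    (hK : K = (Rε + Gᵀ * X * G)⁻¹ * (Gᵀ * X * F + Nεᵀ))
    (S : Matrix (Fin n) (Fin n) ℝ)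
    (hS : S = Fᵀ * X * F + Qε
        - (Fᵀ * X * G + Nε) * (Rε + Gᵀ * X * G)⁻¹ * (Fᵀ * X * G + Nε)ᵀ) :
    ∀ Δ : Matrix (Fin p) (Fin l) ℝ,
      ((1 : Matrix (Fin l) (Fin l) ℝ) - Δᵀ * Δ).PosSemidef →
      (S - (F - G * K + H * Δ * (E₁ - E₂ * K))ᵀ * Splus
            * (F - G * K + H * Δ * (E₁ - E₂ * K))
        - Q - Kᵀ * R * K).PosSemidef := by
  intro Δ hΔ
  set C := F - G * K + H * Δ * (E₁ - E₂ * K)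
  have hXsymm : Xᵀ = X := hX ▸ hXinv.inv.transpose_eq_self
  have hgain : (R + ε⁻¹ • (E₂ᵀ * E₂) + Gᵀ * X * G) * K = Gᵀ * X * F + ε⁻¹ • (E₂ᵀ * E₁) := by
    rw [← hRε, hK, ← Matrix.mul_assoc,
      mul_nonsing_inv _ ((isUnit_iff_isUnit_det _).mp hRX.isUnit), Matrix.one_mul, hNε,
      transpose_smul, transpose_mul, transpose_transpose]
  have hSK : S = Fᵀ * X * F + Qε - (Fᵀ * X * G + Nε) * K := by
    have htr : (Fᵀ * X * G + Nε)ᵀ = Gᵀ * X * F + Nεᵀ := by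
      simp only [transpose_add, transpose_mul, transpose_transpose, hXsymm, Matrix.mul_assoc]
    rw [hS, Matrix.mul_assoc _ _ (Fᵀ * X * G + Nε)ᵀ, htr, ← hK]
  have hsplit : S - Cᵀ * Splus * C - Q - Kᵀ * R * K
      = (F - G * K)ᵀ * X * (F - G * K) + ε⁻¹ • ((E₁ - E₂ * K)ᵀ * (E₁ - E₂ * K))
        - Cᵀ * Splus * C := by
    rw [← riccati_completing_square F G X R E₁ E₂ ε⁻¹ hgain, hSK, hQε, hNε]
    abel
  rw [hsplit, hX]
  exact posSemidef_sub_transpose_mul_mul_perturbed hSplus hε hXinv hΔ _ _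

theorem stmt_4 {n m p l : ℕ}
    (F : Matrix (Fin n) (Fin n) ℝ) (G : Matrix (Fin n) (Fin m) ℝ)
    (H : Matrix (Fin n) (Fin p) ℝ)
    (E₁ : Matrix (Fin l) (Fin n) ℝ) (E₂ : Matrix (Fin l) (Fin m) ℝ)
    (Q : Matrix (Fin n) (Fin n) ℝ) (R : Matrix (Fin m) (Fin m) ℝ)
    (hQ : Q.PosSemidef) (hR : R.PosSemidef)
    (ε : ℝ) (hε : 0 < ε)
    (Splus : Matrix (Fin n) (Fin n) ℝ) (hSplus : Splus.PosDef)
    (hXinv : (Splus⁻¹ - ε • (H * Hᵀ)).PosDef)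
    (X : Matrix (Fin n) (Fin n) ℝ)
    (hX : X = (Splus⁻¹ - ε • (H * Hᵀ))⁻¹)
    (Qε : Matrix (Fin n) (Fin n) ℝ) (hQε : Qε = Q + ε⁻¹ • (E₁ᵀ * E₁))
    (Rε : Matrix (Fin m) (Fin m) ℝ) (hRε : Rε = R + ε⁻¹ • (E₂ᵀ * E₂))
    (Nε : Matrix (Fin n) (Fin m) ℝ) (hNε : Nε = ε⁻¹ • (E₁ᵀ * E₂))
    (hRX : (Rε + Gᵀ * X * G).PosDef)
    (K : Matrix (Fin m) (Fin n) ℝ)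
    (hK : K = (Rε + Gᵀ * X * G)⁻¹ * (Gᵀ * X * F + Nεᵀ))
    (S : Matrix (Fin n) (Fin n) ℝ)
    (hS : S = Fᵀ * X * F + Qε
        - (Fᵀ * X * G + Nε) * (Rε + Gᵀ * X * G)⁻¹ * (Fᵀ * X * G + Nε)ᵀ) :
    ∀ Δ : Matrix (Fin p) (Fin l) ℝ,
      ((1 : Matrix (Fin l) (Fin l) ℝ) - Δᵀ * Δ).PosSemidef →
      (S - (F - G * K + H * Δ * (E₁ - E₂ * K))ᵀ * Splus
            * (F - G * K + H * Δ * (E₁ - E₂ * K))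
        - Q - Kᵀ * R * K).PosSemidef :=
  stmt_4_general F G H E₁ E₂ Q R ε hε Splus hSplus hXinv X hX Qε hQε Rε hRε Nε hNε hRX K hK S hS
end

section
/- (Theorem 2: the guaranteed cost control is a sub-optimal solution of the deterministic dynamic program.) Fix integers 0 ≤ i < N and matrices F ∈ ℝ^{n×n}, G ∈ ℝ^{n×m}, H ∈ ℝ^{n×p}, E₁ ∈ ℝ^{l×n}, E₂ ∈ ℝ^{l×m}, symmetric Q ⪰ 0 and R ⪰ 0, and reals ε_k > 0 for i ≤ k ≤ N−1. Suppose symmetric positive definite matrices S_k (i ≤ k ≤ N) satisfy: for each k, S_{k+1}⁻¹ − ε_k·H Hᵀ is positive definite, X_{k+1} = (S_{k+1}⁻¹ − ε_k·H Hᵀ)⁻¹, R_{ε_k} + Gᵀ X_{k+1} G is positive definite, and S_k = Fᵀ X_{k+1} F + Q_{ε_k} − (Fᵀ X_{k+1} G + N_{ε_k})(R_{ε_k} + Gᵀ X_{k+1} G)⁻¹ (Fᵀ X_{k+1} G + N_{ε_k})ᵀ, where Q_{ε_k} = Q + ε_k⁻¹ E₁ᵀ E₁, R_{ε_k} = R +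 ε_k⁻¹ E₂ᵀ E₂, N_{ε_k} = ε_k⁻¹ E₁ᵀ E₂. Then for every initial state x_i ∈ ℝⁿ there exists a control sequence u_i, …, u_{N−1} ∈ ℝᵐ such that the deterministic trajectory x_{k+1} = F x_k + G u_k satisfies x_Nᵀ S_N x_N + Σ_{k=i}^{N−1} c_k(x_k, u_k) ≤ x_iᵀ S_i x_i, where c_k(x, u) = xᵀ Q_{ε_k} x + uᵀ R_{ε_k} u + 2 xᵀ N_{ε_k} u. -/
/-!
Along any trajectory, `X_{k+1} = (S_{k+1}⁻¹ - ε_k H Hᵀ)⁻¹` dominates `S_{k+1}` because matrix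
inversion is antitone on positive definite matrices. Completing the square in `u` shows that
the guaranteed cost feedback `u_k = -K_k x_k` turns the Riccati recursion into the exact identity
`x_{k+1}ᵀ X_{k+1} x_{k+1} + c_k(x_k, u_k) = x_kᵀ S_k x_k`, so each step dissipates the value
`x_kᵀ S_k x_k`, and the bound follows by telescoping. The feedback is realised as an open-loop
sequence by evaluating it along the closed-loop trajectory from `x_i`.
-/

open Matrix

theorem Finset.add_sum_Ico_le_of_forall_add_le {M : Type*} [AddCommGroup M] [PartialOrder M]
    [IsOrderedAddMonoid M] {f g : ℕ → M} {i N : ℕ} (hiN : i ≤ N)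
    (h : ∀ k, i ≤ k → k < N → f (k + 1) + g k ≤ f k) :
    f N + ∑ k ∈ Finset.Ico i N, g k ≤ f i := by
  have hg : ∑ k ∈ Finset.Ico i N, g k ≤ ∑ k ∈ Finset.Ico i N, -(f (k + 1) - f k) :=
    Finset.sum_le_sum fun k hk => by
      obtain ⟨hik, hkN⟩ := Finset.mem_Ico.mp hk
      rw [neg_sub]
      exact le_sub_iff_add_le'.mpr (h k hik hkN)
  rw [Finset.sum_neg_distrib, Finset.sum_Ico_sub f hiN, neg_sub] at hg
  calc f N + ∑ k ∈ Finset.Ico i N, g k ≤ f N + (f i - f N) := add_le_add_right hg _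
    _ = f i := add_sub_cancel _ _

theorem exists_openLoop_eq_feedback {α β : Type*} (f : ℕ → α → β → α) (κ : ℕ → α → β)
    (i N : ℕ) (x₀ : α) :
    ∃ u : ℕ → β, ∀ x : ℕ → α, x i = x₀ → (∀ k, i ≤ k → k < N → x (k + 1) = f k (x k) (u k)) →
      ∀ k, i ≤ k → k < N → u k = κ k (x k) := by
  let z : ℕ → α := fun j => Nat.rec x₀ (fun j v => f (i + j) v (κ (i + j) v)) j
  refine ⟨fun k => κ k (z (k - i)), fun x hx₀ hx k hik hkN => ?_⟩
  have hxz : ∀ j, i + j ≤ N → x (i + j) = z j := by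
    intro j
    induction j with
    | zero => exact fun _ => hx₀
    | succ j ih =>
      intro hj
      rw [← add_assoc, hx _ (Nat.le_add_right i j) (by omega), ih (by omega)]
      simp only [Nat.add_sub_cancel_left]
      rfl
  show κ k (z (k - i)) = κ k (x k)
  rw [← hxz (k - i) (by omega), Nat.add_sub_cancel' hik]

section

variable {ι κ : Type*} [Fintype ι] [Fintype κ]

def stageCost (Q : Matrix ι ι ℝ) (R : Matrix κ κ ℝ) (N : Matrix ι κ ℝ) (x : ι → ℝ) (u : κ → ℝ) :
    ℝ :=
  x ⬝ᵥ Q *ᵥ x + u ⬝ᵥ R *ᵥ u + 2 * (x ⬝ᵥ N *ᵥ u)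

theorem Matrix.mulVec_dotProduct_mulVec_mulVec {ν : Type*} [Fintype ν] (A : Matrix ι κ ℝ)
    (M : Matrix ι ι ℝ) (B : Matrix ι ν ℝ) (x : κ → ℝ) (y : ν → ℝ) :
    (A *ᵥ x) ⬝ᵥ M *ᵥ (B *ᵥ y) = x ⬝ᵥ (Aᵀ * M * B) *ᵥ y := by
  rw [dotProduct_comm, ← dotProduct_transpose_mulVec, mulVec_mulVec, mulVec_mulVec]

theorem nextValue_add_stageCost (F : Matrix ι ι ℝ) (G : Matrix ι κ ℝ) (X Q : Matrix ι ι ℝ)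
    (R : Matrix κ κ ℝ) (N : Matrix ι κ ℝ) (hX : Xᵀ = X) (x : ι → ℝ) (u : κ → ℝ) :
    (F *ᵥ x + G *ᵥ u) ⬝ᵥ X *ᵥ (F *ᵥ x + G *ᵥ u) + stageCost Q R N x u
      = x ⬝ᵥ (Fᵀ * X * F + Q) *ᵥ x + 2 * (x ⬝ᵥ (Fᵀ * X * G + N) *ᵥ u)
        + u ⬝ᵥ (R + Gᵀ * X * G) *ᵥ u := by
  have hGF : (G *ᵥ u) ⬝ᵥ X *ᵥ (F *ᵥ x) = (F *ᵥ x) ⬝ᵥ X *ᵥ (G *ᵥ u) := by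
    rw [← dotProduct_transpose_mulVec, hX]
  simp only [stageCost, mulVec_add, dotProduct_add, add_dotProduct, add_mulVec, hGF,
    Matrix.mulVec_dotProduct_mulVec_mulVec]
  ring

theorem two_mul_dotProduct_add_dotProduct_of_mulVec_eq [DecidableEq κ] {P : Matrix κ κ ℝ}
    (hP : IsUnit P.det) (W : Matrix ι κ ℝ) {x : ι → ℝ} {u : κ → ℝ} (hu : P *ᵥ u = -(Wᵀ *ᵥ x)) :
    2 * (x ⬝ᵥ W *ᵥ u) + u ⬝ᵥ P *ᵥ u = -(x ⬝ᵥ (W * P⁻¹ * Wᵀ) *ᵥ x) := by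
  have hWx : Wᵀ *ᵥ x = -(P *ᵥ u) := by rw [hu, neg_neg]
  have hxW : x ⬝ᵥ W *ᵥ u = -(u ⬝ᵥ P *ᵥ u) := by
    rw [← dotProduct_transpose_mulVec, hWx, dotProduct_neg]
  have hWPW : x ⬝ᵥ (W * P⁻¹ * Wᵀ) *ᵥ x = u ⬝ᵥ P *ᵥ u := by
    rw [← mulVec_mulVec, ← mulVec_mulVec, ← dotProduct_transpose_mulVec, hWx, mulVec_neg,
      mulVec_mulVec, nonsing_inv_mul _ hP, one_mulVec, neg_dotProduct, dotProduct_neg, neg_neg]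
  rw [hxW, hWPW]
  ring

theorem riccati_step_eq [DecidableEq κ] {F X Q : Matrix ι ι ℝ} {G : Matrix ι κ ℝ}
    {R : Matrix κ κ ℝ} {N : Matrix ι κ ℝ} (hX : Xᵀ = X) (hP : IsUnit (R + Gᵀ * X * G).det)
    {x : ι → ℝ} {u : κ → ℝ} (hu : (R + Gᵀ * X * G) *ᵥ u = -((Fᵀ * X * G + N)ᵀ *ᵥ x)) :
    (F *ᵥ x + G *ᵥ u) ⬝ᵥ X *ᵥ (F *ᵥ x + G *ᵥ u) + stageCost Q R N x u
      = x ⬝ᵥ (Fᵀ * X * F + Q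
          - (Fᵀ * X * G + N) * (R + Gᵀ * X * G)⁻¹ * (Fᵀ * X * G + N)ᵀ) *ᵥ x := by
  rw [nextValue_add_stageCost F G X Q R N hX, add_assoc,
    two_mul_dotProduct_add_dotProduct_of_mulVec_eq hP _ hu, sub_mulVec, dotProduct_sub,
    sub_eq_add_neg]

end

section

variable {ι : Type*} [Fintype ι] [DecidableEq ι]

/-- Completing the square: `v ⬝ᵥ B *ᵥ v` is the maximum of `2 v ⬝ᵥ w - w ⬝ᵥ B⁻¹ *ᵥ w`,
attained at `w = B *ᵥ v`. -/
theorem Matrix.PosDef.two_mul_dotProduct_sub_le {B : Matrix ι ι ℝ} (hB : B.PosDef) (v w : ι → ℝ) :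
    2 * (v ⬝ᵥ w) - w ⬝ᵥ B⁻¹ *ᵥ w ≤ v ⬝ᵥ B *ᵥ v := by
  have hBv : B⁻¹ *ᵥ (B *ᵥ v) = v := by
    rw [mulVec_mulVec, nonsing_inv_mul _ hB.det_pos.ne'.isUnit, one_mulVec]
  have hsq : 0 ≤ (w - B *ᵥ v) ⬝ᵥ B⁻¹ *ᵥ (w - B *ᵥ v) := by
    simpa using hB.inv.posSemidef.dotProduct_mulVec_nonneg (w - B *ᵥ v)
  have hcross : (B *ᵥ v) ⬝ᵥ B⁻¹ *ᵥ w = v ⬝ᵥ w := by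
    rw [← dotProduct_transpose_mulVec, (isHermitian_iff_isSymm.mp hB.inv.isHermitian).eq, hBv,
      dotProduct_comm]
  simp only [mulVec_sub, dotProduct_sub, sub_dotProduct, hBv, hcross] at hsq
  rw [dotProduct_comm w v, dotProduct_comm (B *ᵥ v) v] at hsq
  linarith

theorem Matrix.PosDef.dotProduct_mulVec_le_of_posSemidef_inv_sub {A B : Matrix ι ι ℝ}
    (hA : A.PosDef) (hB : B.PosDef) (hAB : (A⁻¹ - B⁻¹).PosSemidef) (v : ι → ℝ) :
    v ⬝ᵥ A *ᵥ v ≤ v ⬝ᵥ B *ᵥ v := by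
  have hAv : A⁻¹ *ᵥ (A *ᵥ v) = v := by
    rw [mulVec_mulVec, nonsing_inv_mul _ hA.det_pos.ne'.isUnit, one_mulVec]
  have hinv : (A *ᵥ v) ⬝ᵥ B⁻¹ *ᵥ (A *ᵥ v) ≤ (A *ᵥ v) ⬝ᵥ A⁻¹ *ᵥ (A *ᵥ v) := by
    have := hAB.dotProduct_mulVec_nonneg (A *ᵥ v)
    simp only [star_trivial, sub_mulVec, dotProduct_sub] at this
    linarith
  calc v ⬝ᵥ A *ᵥ v = 2 * (v ⬝ᵥ A *ᵥ v) - (A *ᵥ v) ⬝ᵥ A⁻¹ *ᵥ (A *ᵥ v) := by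
        rw [hAv, dotProduct_comm (A *ᵥ v)]; ring
    _ ≤ 2 * (v ⬝ᵥ A *ᵥ v) - (A *ᵥ v) ⬝ᵥ B⁻¹ *ᵥ (A *ᵥ v) := by linarith
    _ ≤ v ⬝ᵥ B *ᵥ v := hB.two_mul_dotProduct_sub_le v (A *ᵥ v)

theorem Matrix.PosDef.dotProduct_mulVec_le_inv_sub_inv {S D : Matrix ι ι ℝ} (hS : S.PosDef)
    (hD : D.PosSemidef) (hSD : (S⁻¹ - D).PosDef) (v : ι → ℝ) :
    v ⬝ᵥ S *ᵥ v ≤ v ⬝ᵥ (S⁻¹ - D)⁻¹ *ᵥ v :=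
  hS.dotProduct_mulVec_le_of_posSemidef_inv_sub hSD.inv
    (by rwa [nonsing_inv_nonsing_inv _ hSD.det_pos.ne'.isUnit, sub_sub_cancel]) v

end

theorem stmt_7_general {n m p : ℕ} (i N : ℕ) (hiN : i < N)
    (F : Matrix (Fin n) (Fin n) ℝ) (G : Matrix (Fin n) (Fin m) ℝ)
    (H : Matrix (Fin n) (Fin p) ℝ)
    (ε : ℕ → ℝ) (hε : ∀ k, i ≤ k → k < N → 0 < ε k)
    (S : ℕ → Matrix (Fin n) (Fin n) ℝ)
    (hS : ∀ k, i ≤ k → k ≤ N → (S k).PosDef)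
    (X : ℕ → Matrix (Fin n) (Fin n) ℝ)
    (Qε : ℕ → Matrix (Fin n) (Fin n) ℝ)
    (Rε : ℕ → Matrix (Fin m) (Fin m) ℝ)
    (Nε : ℕ → Matrix (Fin n) (Fin m) ℝ)
    (hXpd : ∀ k, i ≤ k → k < N → ((S (k + 1))⁻¹ - ε k • (H * Hᵀ)).PosDef)
    (hX : ∀ k, i ≤ k → k < N → X (k + 1) = ((S (k + 1))⁻¹ - ε k • (H * Hᵀ))⁻¹)
    (hRX : ∀ k, i ≤ k → k < N → (Rε k + Gᵀ * X (k + 1) * G).PosDef)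
    (hSrec : ∀ k, i ≤ k → k < N →
      S k = Fᵀ * X (k + 1) * F + Qε k
        - (Fᵀ * X (k + 1) * G + Nε k) * (Rε k + Gᵀ * X (k + 1) * G)⁻¹
            * (Fᵀ * X (k + 1) * G + Nε k)ᵀ) :
    ∀ xi : Fin n → ℝ, ∃ u : ℕ → Fin m → ℝ,
      ∀ x : ℕ → Fin n → ℝ, x i = xi →
        (∀ k, i ≤ k → k < N → x (k + 1) = F.mulVec (x k) + G.mulVec (u k)) →
        x N ⬝ᵥ (S N).mulVec (x N)
          + ∑ k ∈ Finset.Ico i N,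
              (x k ⬝ᵥ (Qε k).mulVec (x k) + u k ⬝ᵥ (Rε k).mulVec (u k)
                + 2 * (x k ⬝ᵥ (Nε k).mulVec (u k)))
          ≤ x i ⬝ᵥ (S i).mulVec (x i) := by
  intro x₀
  obtain ⟨u, hu⟩ := exists_openLoop_eq_feedback (fun _ x u => F *ᵥ x + G *ᵥ u)
    (fun k x => -(((Rε k + Gᵀ * X (k + 1) * G)⁻¹ * (Fᵀ * X (k + 1) * G + Nε k)ᵀ) *ᵥ x)) i N x₀
  refine ⟨u, fun x hx₀ hx => Finset.add_sum_Ico_le_of_forall_add_le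
    (f := fun k => x k ⬝ᵥ S k *ᵥ x k) (g := fun k => stageCost (Qε k) (Rε k) (Nε k) (x k) (u k))
    hiN.le fun k hik hkN => ?_⟩
  have hXk := hX k hik hkN
  have hSX : x (k + 1) ⬝ᵥ S (k + 1) *ᵥ x (k + 1) ≤ x (k + 1) ⬝ᵥ X (k + 1) *ᵥ x (k + 1) := by
    rw [hXk]
    refine (hS _ (by omega) hkN).dotProduct_mulVec_le_inv_sub_inv ?_ (hXpd k hik hkN) _
    simpa using (posSemidef_self_mul_conjTranspose H).smul (hε k hik hkN).le
  have hXsymm : (X (k + 1))ᵀ = X (k + 1) :=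
    (isHermitian_iff_isSymm.mp (hXk ▸ (hXpd k hik hkN).inv).isHermitian).eq
  have hP := (hRX k hik hkN).det_pos.ne'.isUnit
  have hstat : (Rε k + Gᵀ * X (k + 1) * G) *ᵥ u k = -((Fᵀ * X (k + 1) * G + Nε k)ᵀ *ᵥ x k) := by
    rw [hu x hx₀ hx k hik hkN, mulVec_neg, mulVec_mulVec, ← Matrix.mul_assoc,
      mul_nonsing_inv _ hP, Matrix.one_mul]
  calc x (k + 1) ⬝ᵥ S (k + 1) *ᵥ x (k + 1) + stageCost (Qε k) (Rε k) (Nε k) (x k) (u k)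
      ≤ x (k + 1) ⬝ᵥ X (k + 1) *ᵥ x (k + 1) + stageCost (Qε k) (Rε k) (Nε k) (x k) (u k) := by
        gcongr
    _ = x k ⬝ᵥ S k *ᵥ x k := by
        rw [hSrec k hik hkN, hx k hik hkN]
        exact riccati_step_eq hXsymm hP hstat

theorem stmt_7 {n m p l : ℕ} (i N : ℕ) (hiN : i < N)
    (F : Matrix (Fin n) (Fin n) ℝ) (G : Matrix (Fin n) (Fin m) ℝ)
    (H : Matrix (Fin n) (Fin p) ℝ)
    (E₁ : Matrix (Fin l) (Fin n) ℝ) (E₂ : Matrix (Fin l) (Fin m) ℝ)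
    (Q : Matrix (Fin n) (Fin n) ℝ) (R : Matrix (Fin m) (Fin m) ℝ)
    (hQ : Q.PosSemidef) (hR : R.PosSemidef)
    (ε : ℕ → ℝ) (hε : ∀ k, i ≤ k → k < N → 0 < ε k)
    (S : ℕ → Matrix (Fin n) (Fin n) ℝ)
    (hS : ∀ k, i ≤ k → k ≤ N → (S k).PosDef)
    (X : ℕ → Matrix (Fin n) (Fin n) ℝ)
    (Qε : ℕ → Matrix (Fin n) (Fin n) ℝ)
    (hQε : ∀ k, Qε k = Q + (ε k)⁻¹ • (E₁ᵀ * E₁))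
    (Rε : ℕ → Matrix (Fin m) (Fin m) ℝ)
    (hRε : ∀ k, Rε k = R + (ε k)⁻¹ • (E₂ᵀ * E₂))
    (Nε : ℕ → Matrix (Fin n) (Fin m) ℝ)
    (hNε : ∀ k, Nε k = (ε k)⁻¹ • (E₁ᵀ * E₂))
    (hXpd : ∀ k, i ≤ k → k < N → ((S (k + 1))⁻¹ - ε k • (H * Hᵀ)).PosDef)
    (hX : ∀ k, i ≤ k → k < N → X (k + 1) = ((S (k + 1))⁻¹ - ε k • (H * Hᵀ))⁻¹)
    (hRX : ∀ k, i ≤ k → k < N → (Rε k + Gᵀ * X (k + 1) * G).PosDef)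
    (hSrec : ∀ k, i ≤ k → k < N →
      S k = Fᵀ * X (k + 1) * F + Qε k
        - (Fᵀ * X (k + 1) * G + Nε k) * (Rε k + Gᵀ * X (k + 1) * G)⁻¹
            * (Fᵀ * X (k + 1) * G + Nε k)ᵀ) :
    ∀ xi : Fin n → ℝ, ∃ u : ℕ → Fin m → ℝ,
      ∀ x : ℕ → Fin n → ℝ, x i = xi →
        (∀ k, i ≤ k → k < N → x (k + 1) = F.mulVec (x k) + G.mulVec (u k)) →
        x N ⬝ᵥ (S N).mulVec (x N)
          + ∑ k ∈ Finset.Ico i N,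
              (x k ⬝ᵥ (Qε k).mulVec (x k) + u k ⬝ᵥ (Rε k).mulVec (u k)
                + 2 * (x k ⬝ᵥ (Nε k).mulVec (u k)))
          ≤ x i ⬝ᵥ (S i).mulVec (x i) :=
  stmt_7_general i N hiN F G H ε hε S hS X Qε Rε Nε hXpd hX hRX hSrec
end

section
/- (Lemma 2: cost bound for the re-parametrized control.) Under the setting of Theorem 2 — symmetric positive definite S_k (i ≤ k ≤ N) with, for each i ≤ k ≤ N−1: S_{k+1}⁻¹ − ε_k·H Hᵀ positive definite, X_{k+1} = (S_{k+1}⁻¹ − ε_k·H Hᵀ)⁻¹, R_{ε_k} + Gᵀ X_{k+1} G positive definite, K_k = (R_{ε_k} + Gᵀ X_{k+1} G)⁻¹ (Gᵀ X_{k+1} F + N_{ε_k}ᵀ), and S_k = Fᵀ X_{k+1} F + Q_{ε_k} − (Fᵀ X_{k+1} G + N_{ε_k})(R_{ε_k} + Gᵀ X_{k+1} G)⁻¹ (Fᵀ X_{k+1} G + N_{ε_k})ᵀ — the following holds. For every x_i ∈ ℝⁿ and every sequence v_i, …, v_{N−1} ∈ ℝᵐ, define the trajectory x_{k+1} = (F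 − G K_k) x_k + G v_k and controls u_k = −K_k x_k + v_k. Then x_Nᵀ S_N x_N + Σ_{k=i}^{N−1} c_k(x_k, u_k) ≤ x_iᵀ S_i x_i + Σ_{k=i}^{N−1} v_kᵀ (R_{ε_k} + Gᵀ X_{k+1} G) v_k, where c_k(x, u) = xᵀ Q_{ε_k} x + uᵀ R_{ε_k} u + 2 xᵀ N_{ε_k} u. -/
/-!
Completing the square in the Riccati recursion gives, at every stage,
`x_{k+1}ᵀ X_{k+1} x_{k+1} + c_k(x_k, u_k) = x_kᵀ S_k x_k + v_kᵀ (R_{ε_k} + Gᵀ X_{k+1} G) v_k`.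
Since `S_{k+1}⁻¹ ⪰ S_{k+1}⁻¹ - ε_k H Hᵀ ≻ 0` and inversion reverses the Loewner order,
`X_{k+1} ⪰ S_{k+1}`; replacing `X_{k+1}` by `S_{k+1}` turns the identity into an inequality,
and these inequalities telescope over `k = i, …, N - 1`.
-/

open Matrix

namespace Matrix

variable {ι κ R : Type*} [Fintype ι] [Fintype κ] [CommSemiring R]

lemma IsSymm.dotProduct_mulVec_comm {A : Matrix ι ι R} (hA : A.IsSymm) (x y : ι → R) :
    x ⬝ᵥ A *ᵥ y = y ⬝ᵥ A *ᵥ x := by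
  rw [dotProduct_mulVec, ← mulVec_transpose, hA.eq, dotProduct_comm]

lemma mulVec_dotProduct (M : Matrix ι κ R) (a : κ → R) (b : ι → R) :
    (M *ᵥ a) ⬝ᵥ b = a ⬝ᵥ Mᵀ *ᵥ b := by
  rw [dotProduct_mulVec, vecMul_transpose]

variable [DecidableEq ι]

/-- The bound is attained at `y = A⁻¹ x`: it is `0 ≤ (A⁻¹ x - y)ᵀ A (A⁻¹ x - y)`. -/
lemma PosDef.two_mul_dotProduct_sub_le_s8 {A : Matrix ι ι ℝ} (hA : A.PosDef) (x y : ι → ℝ) :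
    2 * (y ⬝ᵥ x) - y ⬝ᵥ A *ᵥ y ≤ x ⬝ᵥ A⁻¹ *ᵥ x := by
  have hAx : A *ᵥ (A⁻¹ *ᵥ x) = x := by
    rw [mulVec_mulVec, mul_nonsing_inv A ((isUnit_iff_isUnit_det A).mp hA.isUnit), one_mulVec]
  have hsymm : A.IsSymm := isHermitian_iff_isSymm.mp hA.isHermitian
  have h := hA.posSemidef.dotProduct_mulVec_nonneg (A⁻¹ *ᵥ x - y)
  simp only [star_trivial, mulVec_sub, hAx, sub_dotProduct, dotProduct_sub] at h
  rw [hsymm.dotProduct_mulVec_comm (A⁻¹ *ᵥ x), hAx, dotProduct_comm (A⁻¹ *ᵥ x)] at h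
  linarith

/-- Inversion reverses the Loewner order: evaluate the previous bound at `y = B⁻¹ x`. -/
lemma PosDef.dotProduct_inv_mulVec_le {A B : Matrix ι ι ℝ} (hA : A.PosDef) (hB : IsUnit B.det)
    (hAB : (B - A).PosSemidef) (x : ι → ℝ) : x ⬝ᵥ B⁻¹ *ᵥ x ≤ x ⬝ᵥ A⁻¹ *ᵥ x := by
  set y := B⁻¹ *ᵥ x
  have hBy : B *ᵥ y = x := by rw [mulVec_mulVec, mul_nonsing_inv B hB, one_mulVec]
  have hAy : y ⬝ᵥ A *ᵥ y ≤ y ⬝ᵥ x := by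
    have h := hAB.dotProduct_mulVec_nonneg y
    simp only [star_trivial, sub_mulVec, hBy, dotProduct_sub] at h
    linarith
  have hyx : y ⬝ᵥ x = x ⬝ᵥ B⁻¹ *ᵥ x := dotProduct_comm _ _
  linarith [hA.two_mul_dotProduct_sub_le_s8 x y]

lemma dotProduct_mulVec_le_inv_sub {S D : Matrix ι ι ℝ} (hS : IsUnit S.det) (hD : D.PosSemidef)
    (hSD : (S⁻¹ - D).PosDef) (x : ι → ℝ) : x ⬝ᵥ S *ᵥ x ≤ x ⬝ᵥ (S⁻¹ - D)⁻¹ *ᵥ x := by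
  have h := hSD.dotProduct_inv_mulVec_le (B := S⁻¹) (isUnit_nonsing_inv_det S hS)
    (by rwa [sub_sub_cancel]) x
  rwa [nonsing_inv_nonsing_inv S hS] at h

end Matrix

section LinearQuadratic

variable {ι κ : Type*} [Fintype ι] [Fintype κ]

lemma dotProduct_mulVec_add_stageCost {F : Matrix ι ι ℝ} {G : Matrix ι κ ℝ} {P : Matrix ι ι ℝ}
    (hP : P.IsSymm) (Q : Matrix ι ι ℝ) (R : Matrix κ κ ℝ) (N : Matrix ι κ ℝ) (x : ι → ℝ)
    (u : κ → ℝ) :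
    (F *ᵥ x + G *ᵥ u) ⬝ᵥ P *ᵥ (F *ᵥ x + G *ᵥ u) + stageCost Q R N x u
      = x ⬝ᵥ (Fᵀ * P * F + Q) *ᵥ x + 2 * (x ⬝ᵥ (Fᵀ * P * G + N) *ᵥ u)
        + u ⬝ᵥ (R + Gᵀ * P * G) *ᵥ u := by
  simp only [stageCost, add_mulVec, ← mulVec_mulVec, mulVec_add, dotProduct_add,
    add_dotProduct, ← mulVec_dotProduct]
  rw [hP.dotProduct_mulVec_comm (G *ᵥ u)]
  ring

lemma dotProduct_mulVec_add_sq {A : Matrix κ κ ℝ} {K : Matrix κ ι ℝ} {W : Matrix ι κ ℝ}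
    (hA : A.IsSymm) (hAK : A * K = Wᵀ) (x : ι → ℝ) (u : κ → ℝ) :
    (u + K *ᵥ x) ⬝ᵥ A *ᵥ (u + K *ᵥ x)
      = u ⬝ᵥ A *ᵥ u + 2 * (x ⬝ᵥ W *ᵥ u) + x ⬝ᵥ (W * K) *ᵥ x := by
  have hcross : u ⬝ᵥ A *ᵥ (K *ᵥ x) = x ⬝ᵥ W *ᵥ u := by
    rw [mulVec_mulVec, hAK, ← mulVec_dotProduct, dotProduct_comm]
  have hsq : (K *ᵥ x) ⬝ᵥ A *ᵥ (K *ᵥ x) = x ⬝ᵥ (W * K) *ᵥ x := by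
    rw [mulVec_mulVec, hAK, ← mulVec_dotProduct, dotProduct_comm, mulVec_mulVec]
  simp only [mulVec_add, dotProduct_add, add_dotProduct, hcross, hsq]
  rw [hA.dotProduct_mulVec_comm (K *ᵥ x), hcross]
  ring

theorem dotProduct_mulVec_add_stageCost_eq_riccati [DecidableEq κ] {F : Matrix ι ι ℝ}
    {G : Matrix ι κ ℝ} {P Q : Matrix ι ι ℝ} {R : Matrix κ κ ℝ} {N : Matrix ι κ ℝ}
    {K : Matrix κ ι ℝ} (hP : P.IsSymm) (hA : (R + Gᵀ * P * G).IsSymm)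
    (hA' : IsUnit (R + Gᵀ * P * G).det) (hK : K = (R + Gᵀ * P * G)⁻¹ * (Gᵀ * P * F + Nᵀ))
    (x : ι → ℝ) (v : κ → ℝ) :
    ((F - G * K) *ᵥ x + G *ᵥ v) ⬝ᵥ P *ᵥ ((F - G * K) *ᵥ x + G *ᵥ v)
        + stageCost Q R N x (-(K *ᵥ x) + v)
      = x ⬝ᵥ (Fᵀ * P * F + Q
          - (Fᵀ * P * G + N) * (R + Gᵀ * P * G)⁻¹ * (Fᵀ * P * G + N)ᵀ) *ᵥ x
        + v ⬝ᵥ (R + Gᵀ * P * G) *ᵥ v := by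
  set A := R + Gᵀ * P * G
  set W := Fᵀ * P * G + N
  have hWt : Wᵀ = Gᵀ * P * F + Nᵀ := by
    simp only [W, transpose_add, transpose_mul, transpose_transpose, hP.eq, Matrix.mul_assoc]
  have hAK : A * K = Wᵀ := by
    rw [hK, hWt, ← Matrix.mul_assoc, mul_nonsing_inv A hA', Matrix.one_mul]
  have hWK : W * A⁻¹ * Wᵀ = W * K := by rw [hK, hWt, Matrix.mul_assoc]
  set u := -(K *ᵥ x) + v
  have hy : (F - G * K) *ᵥ x + G *ᵥ v = F *ᵥ x + G *ᵥ u := by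
    simp only [u, sub_mulVec, mulVec_add, mulVec_neg, mulVec_mulVec]
    abel
  have hv : v = u + K *ᵥ x := by simp only [u, neg_add_cancel_comm]
  rw [hy, dotProduct_mulVec_add_stageCost hP, hv, dotProduct_mulVec_add_sq hA hAK, hWK,
    sub_mulVec, dotProduct_sub]
  ring

end LinearQuadratic

theorem add_sum_Ico_le_add_sum_Ico {M : Type*} [AddCommGroup M] [PartialOrder M]
    [IsOrderedAddMonoid M] {f c g : ℕ → M} {i N : ℕ} (hiN : i ≤ N)
    (h : ∀ k, i ≤ k → k < N → f (k + 1) + c k ≤ f k + g k) :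
    f N + ∑ k ∈ Finset.Ico i N, c k ≤ f i + ∑ k ∈ Finset.Ico i N, g k := by
  have hsum : ∑ k ∈ Finset.Ico i N, (f (k + 1) - f k + c k) ≤ ∑ k ∈ Finset.Ico i N, g k :=
    Finset.sum_le_sum fun k hk => by
      obtain ⟨hik, hkN⟩ := Finset.mem_Ico.mp hk
      rw [sub_add_eq_add_sub, sub_le_iff_le_add']
      exact h k hik hkN
  rw [Finset.sum_add_distrib, Finset.sum_Ico_sub f hiN, sub_add_eq_add_sub,
    sub_le_iff_le_add'] at hsum
  exact hsum

theorem stmt_8_general {n m p : ℕ} (i N : ℕ) (hiN : i < N)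
    (F : Matrix (Fin n) (Fin n) ℝ) (G : Matrix (Fin n) (Fin m) ℝ)
    (H : Matrix (Fin n) (Fin p) ℝ)
    (ε : ℕ → ℝ) (hε : ∀ k, i ≤ k → k < N → 0 < ε k)
    (S : ℕ → Matrix (Fin n) (Fin n) ℝ)
    (hS : ∀ k, i ≤ k → k ≤ N → (S k).PosDef)
    (X : ℕ → Matrix (Fin n) (Fin n) ℝ)
    (Qε : ℕ → Matrix (Fin n) (Fin n) ℝ)
    (Rε : ℕ → Matrix (Fin m) (Fin m) ℝ)
    (Nε : ℕ → Matrix (Fin n) (Fin m) ℝ)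
    (hXpd : ∀ k, i ≤ k → k < N → ((S (k + 1))⁻¹ - ε k • (H * Hᵀ)).PosDef)
    (hX : ∀ k, i ≤ k → k < N → X (k + 1) = ((S (k + 1))⁻¹ - ε k • (H * Hᵀ))⁻¹)
    (hRX : ∀ k, i ≤ k → k < N → (Rε k + Gᵀ * X (k + 1) * G).PosDef)
    (K : ℕ → Matrix (Fin m) (Fin n) ℝ)
    (hK : ∀ k, i ≤ k → k < N →
      K k = (Rε k + Gᵀ * X (k + 1) * G)⁻¹ * (Gᵀ * X (k + 1) * F + (Nε k)ᵀ))
    (hSrec : ∀ k, i ≤ k → k < N →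
      S k = Fᵀ * X (k + 1) * F + Qε k
        - (Fᵀ * X (k + 1) * G + Nε k) * (Rε k + Gᵀ * X (k + 1) * G)⁻¹
            * (Fᵀ * X (k + 1) * G + Nε k)ᵀ)
    (v : ℕ → Fin m → ℝ)
    (x : ℕ → Fin n → ℝ) (u : ℕ → Fin m → ℝ)
    (hx : ∀ k, i ≤ k → k < N →
      x (k + 1) = (F - G * K k).mulVec (x k) + G.mulVec (v k))
    (hu : ∀ k, i ≤ k → k < N → u k = -(K k).mulVec (x k) + v k) :
    x N ⬝ᵥ (S N).mulVec (x N)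
      + ∑ k ∈ Finset.Ico i N,
          (x k ⬝ᵥ (Qε k).mulVec (x k) + u k ⬝ᵥ (Rε k).mulVec (u k)
            + 2 * (x k ⬝ᵥ (Nε k).mulVec (u k)))
      ≤ x i ⬝ᵥ (S i).mulVec (x i)
        + ∑ k ∈ Finset.Ico i N, v k ⬝ᵥ (Rε k + Gᵀ * X (k + 1) * G).mulVec (v k) := by
  refine add_sum_Ico_le_add_sum_Ico (f := fun k => x k ⬝ᵥ S k *ᵥ x k)
    (c := fun k => stageCost (Qε k) (Rε k) (Nε k) (x k) (u k)) hiN.le fun k hik hkN => ?_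
  have hSk := hS (k + 1) (by omega) hkN
  have hHH : (ε k • (H * Hᵀ)).PosSemidef := by
    simpa using (posSemidef_self_mul_conjTranspose H).smul (hε k hik hkN).le
  have hSX : x (k + 1) ⬝ᵥ S (k + 1) *ᵥ x (k + 1) ≤ x (k + 1) ⬝ᵥ X (k + 1) *ᵥ x (k + 1) := by
    rw [hX k hik hkN]
    exact dotProduct_mulVec_le_inv_sub ((isUnit_iff_isUnit_det _).mp hSk.isUnit) hHH
      (hXpd k hik hkN) _
  have hXsymm : (X (k + 1)).IsSymm :=
    isHermitian_iff_isSymm.mp (hX k hik hkN ▸ (hXpd k hik hkN).inv).isHermitian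
  have hstep := dotProduct_mulVec_add_stageCost_eq_riccati (Q := Qε k) hXsymm
    (isHermitian_iff_isSymm.mp (hRX k hik hkN).isHermitian)
    ((isUnit_iff_isUnit_det _).mp (hRX k hik hkN).isUnit) (hK k hik hkN) (x k) (v k)
  rw [← hx k hik hkN, ← hu k hik hkN, ← hSrec k hik hkN] at hstep
  linarith

theorem stmt_8 {n m p l : ℕ} (i N : ℕ) (hiN : i < N)
    (F : Matrix (Fin n) (Fin n) ℝ) (G : Matrix (Fin n) (Fin m) ℝ)
    (H : Matrix (Fin n) (Fin p) ℝ)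
    (E₁ : Matrix (Fin l) (Fin n) ℝ) (E₂ : Matrix (Fin l) (Fin m) ℝ)
    (Q : Matrix (Fin n) (Fin n) ℝ) (R : Matrix (Fin m) (Fin m) ℝ)
    (hQ : Q.PosSemidef) (hR : R.PosSemidef)
    (ε : ℕ → ℝ) (hε : ∀ k, i ≤ k → k < N → 0 < ε k)
    (S : ℕ → Matrix (Fin n) (Fin n) ℝ)
    (hS : ∀ k, i ≤ k → k ≤ N → (S k).PosDef)
    (X : ℕ → Matrix (Fin n) (Fin n) ℝ)
    (Qε : ℕ → Matrix (Fin n) (Fin n) ℝ)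
    (hQε : ∀ k, Qε k = Q + (ε k)⁻¹ • (E₁ᵀ * E₁))
    (Rε : ℕ → Matrix (Fin m) (Fin m) ℝ)
    (hRε : ∀ k, Rε k = R + (ε k)⁻¹ • (E₂ᵀ * E₂))
    (Nε : ℕ → Matrix (Fin n) (Fin m) ℝ)
    (hNε : ∀ k, Nε k = (ε k)⁻¹ • (E₁ᵀ * E₂))
    (hXpd : ∀ k, i ≤ k → k < N → ((S (k + 1))⁻¹ - ε k • (H * Hᵀ)).PosDef)
    (hX : ∀ k, i ≤ k → k < N → X (k + 1) = ((S (k + 1))⁻¹ - ε k • (H * Hᵀ))⁻¹)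
    (hRX : ∀ k, i ≤ k → k < N → (Rε k + Gᵀ * X (k + 1) * G).PosDef)
    (K : ℕ → Matrix (Fin m) (Fin n) ℝ)
    (hK : ∀ k, i ≤ k → k < N →
      K k = (Rε k + Gᵀ * X (k + 1) * G)⁻¹ * (Gᵀ * X (k + 1) * F + (Nε k)ᵀ))
    (hSrec : ∀ k, i ≤ k → k < N →
      S k = Fᵀ * X (k + 1) * F + Qε k
        - (Fᵀ * X (k + 1) * G + Nε k) * (Rε k + Gᵀ * X (k + 1) * G)⁻¹
            * (Fᵀ * X (k + 1) * G + Nε k)ᵀ)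
    (v : ℕ → Fin m → ℝ)
    (x : ℕ → Fin n → ℝ) (u : ℕ → Fin m → ℝ)
    (hx : ∀ k, i ≤ k → k < N →
      x (k + 1) = (F - G * K k).mulVec (x k) + G.mulVec (v k))
    (hu : ∀ k, i ≤ k → k < N → u k = -(K k).mulVec (x k) + v k) :
    x N ⬝ᵥ (S N).mulVec (x N)
      + ∑ k ∈ Finset.Ico i N,
          (x k ⬝ᵥ (Qε k).mulVec (x k) + u k ⬝ᵥ (Rε k).mulVec (u k)
            + 2 * (x k ⬝ᵥ (Nε k).mulVec (u k)))
      ≤ x i ⬝ᵥ (S i).mulVec (x i)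
        + ∑ k ∈ Finset.Ico i N, v k ⬝ᵥ (Rε k + Gᵀ * X (k + 1) * G).mulVec (v k) :=
  stmt_8_general i N hiN F G H ε hε S hS X Qε Rε Nε hXpd hX hRX K hK hSrec v x u hx hu
end

section
/- (Lemma 4: recursive disturbance-norm bound.) Let F̃ ∈ ℝ^{n×n}, G ∈ ℝ^{n×m}, H ∈ ℝ^{n×p}, Ẽ₁ ∈ ℝ^{l×n}, E₂ ∈ ℝ^{l×m}. Define φ_k(x, v) = ‖Ẽ₁ x + E₂ v‖₂, and let ρ_i ≥ 0 be reals such that ‖Ẽ₁ F̃^i H z‖₂ ≤ ρ_i ‖z‖₂ for all z ∈ ℝᵖ and all i ≥ 0. Define recursively c(k, i) = ρ_{k−i−1} + Σ_{j=0}^{k−i−2} ρ_j · c(k−j−1, i) for all integers 0 ≤ i < k. Let sequences (x̄_k), (x_k) in ℝⁿ, (v_k) in ℝᵐ, (w_k) in ℝᵖ satisfy x̄_{k+1} = F̃ x̄_k + G v_k + H w_k, x_{k+1} = F̃ x_k + G v_k, x̄_0 = x_0, and ‖w_k‖₂ ≤ φ_k(x̄_k, v_k) for all k. Then for every k ≥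 0, ‖w_k‖₂ ≤ φ_k(x̄_k, v_k) ≤ φ_k(x_k, v_k) + Σ_{i=0}^{k−1} c(k, i) · φ_i(x_i, v_i). -/
open Matrix

/-- Euclidean norm of a real vector. -/
noncomputable def vecEnorm {d : ℕ} (x : Fin d → ℝ) : ℝ := Real.sqrt (x ⬝ᵥ x)

/-!
The deviation `x̄ₖ - xₖ` obeys the recurrence `e_{k+1} = F̃ eₖ + H wₖ` with `e₀ = 0`, so
`x̄ₖ - xₖ = ∑_{j<k} F̃ʲ H w_{k-1-j}`. Applying `Ẽ₁`, the triangle inequality, the bounds `ρⱼ` and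
`‖wᵢ‖ ≤ φ(x̄ᵢ, vᵢ)` give the discrete Volterra inequality
`φ(x̄ₖ, vₖ) ≤ φ(xₖ, vₖ) + ∑_{j<k} ρⱼ φ(x̄_{k-1-j}, v_{k-1-j})`. Substituting the bound for the
earlier terms (strong induction) and exchanging the two sums reproduces exactly the recursion
defining `c`, which is therefore the resolvent kernel of this inequality.
-/

open Finset

lemma vecEnorm_eq_norm {d : ℕ} (x : Fin d → ℝ) : vecEnorm x = ‖WithLp.toLp 2 x‖ := by
  simp [vecEnorm, EuclideanSpace.norm_eq, dotProduct, sq]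

lemma vecEnorm_add_le {d : ℕ} (x y : Fin d → ℝ) : vecEnorm (x + y) ≤ vecEnorm x + vecEnorm y := by
  simpa only [vecEnorm_eq_norm, WithLp.toLp_add] using norm_add_le _ _

lemma vecEnorm_sum_le {d : ℕ} {ι : Type*} (s : Finset ι) (f : ι → Fin d → ℝ) :
    vecEnorm (∑ i ∈ s, f i) ≤ ∑ i ∈ s, vecEnorm (f i) := by
  simpa only [vecEnorm_eq_norm, WithLp.toLp_sum] using norm_sum_le _ _

theorem Matrix.eq_sum_pow_mulVec_of_succ {ι R : Type*} [Fintype ι] [DecidableEq ι] [Semiring R]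
    (A : Matrix ι ι R) {e b : ℕ → ι → R} (h0 : e 0 = 0) (hsucc : ∀ k, e (k + 1) = A *ᵥ e k + b k)
    (k : ℕ) : e k = ∑ j ∈ range k, (A ^ j) *ᵥ b (k - 1 - j) := by
  induction k with
  | zero => simp [h0]
  | succ k ih =>
    rw [hsucc, ih, sum_range_succ', mulVec_sum]
    simp only [mulVec_mulVec, ← pow_succ', pow_zero, one_mulVec, add_tsub_cancel_right, tsub_zero]
    refine congrArg (· + _) (sum_congr rfl fun j _ => ?_)
    rw [Nat.sub_sub, Nat.add_comm 1 j]

def IsVolterraResolvent (ρ : ℕ → ℝ) (c : ℕ → ℕ → ℝ) : Prop :=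
  ∀ i k, i < k → c k i = ρ (k - i - 1) + ∑ j ∈ range (k - i - 1), ρ j * c (k - j - 1) i

namespace IsVolterraResolvent

variable {ρ : ℕ → ℝ} {c : ℕ → ℕ → ℝ}

theorem sum_mul_add_sum_eq (hc : IsVolterraResolvent ρ c) (b : ℕ → ℝ) (k : ℕ) :
    ∑ j ∈ range k, ρ j * (b (k - 1 - j) + ∑ i ∈ range (k - 1 - j), c (k - 1 - j) i * b i)
      = ∑ i ∈ range k, c k i * b i := by
  have hreflect : ∑ j ∈ range k, ρ j * b (k - 1 - j) = ∑ i ∈ range k, ρ (k - 1 - i) * b i := by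
    rw [← sum_range_reflect]
    refine sum_congr rfl fun j hj => ?_
    rw [Nat.sub_sub_self (by simp at hj; omega)]
  have hswap : ∑ j ∈ range k, ∑ i ∈ range (k - 1 - j), ρ j * (c (k - 1 - j) i * b i)
      = ∑ i ∈ range k, ∑ j ∈ range (k - 1 - i), ρ j * (c (k - 1 - j) i * b i) :=
    sum_comm' fun j i => by simp only [mem_range]; omega
  simp only [mul_add, sum_add_distrib, mul_sum]
  rw [hreflect, hswap, ← sum_add_distrib]
  refine sum_congr rfl fun i hi => ?_
  rw [hc i k (mem_range.1 hi), add_mul, sum_mul, Nat.sub_right_comm]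
  congr 1
  refine sum_congr rfl fun j _ => ?_
  rw [Nat.sub_right_comm, mul_assoc]

theorem le_add_sum_mul (hc : IsVolterraResolvent ρ c) (hρ : ∀ i, 0 ≤ ρ i) {a b : ℕ → ℝ}
    (ha : ∀ k, a k ≤ b k + ∑ j ∈ range k, ρ j * a (k - 1 - j)) (k : ℕ) :
    a k ≤ b k + ∑ i ∈ range k, c k i * b i := by
  induction k using Nat.strong_induction_on with
  | _ k ih =>
    calc a k ≤ b k + ∑ j ∈ range k, ρ j * a (k - 1 - j) := ha k
      _ ≤ b k + ∑ j ∈ range k,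
            ρ j * (b (k - 1 - j) + ∑ i ∈ range (k - 1 - j), c (k - 1 - j) i * b i) := by
        gcongr with j hj
        · exact hρ j
        · exact ih _ (by simp at hj; omega)
      _ = b k + ∑ i ∈ range k, c k i * b i := by rw [hc.sum_mul_add_sum_eq]

end IsVolterraResolvent

theorem stmt_11 {n m p l : ℕ}
    (Ftil : Matrix (Fin n) (Fin n) ℝ) (G : Matrix (Fin n) (Fin m) ℝ)
    (H : Matrix (Fin n) (Fin p) ℝ)
    (Etil₁ : Matrix (Fin l) (Fin n) ℝ) (E₂ : Matrix (Fin l) (Fin m) ℝ)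
    (φ : (Fin n → ℝ) → (Fin m → ℝ) → ℝ)
    (hφ : ∀ x v, φ x v = vecEnorm (Etil₁.mulVec x + E₂.mulVec v))
    (ρ : ℕ → ℝ) (hρ0 : ∀ i, 0 ≤ ρ i)
    (hρ : ∀ (i : ℕ) (z : Fin p → ℝ),
      vecEnorm ((Etil₁ * Ftil ^ i * H).mulVec z) ≤ ρ i * vecEnorm z)
    (c : ℕ → ℕ → ℝ)
    (hc : ∀ i k, i < k →
      c k i = ρ (k - i - 1) + ∑ j ∈ Finset.range (k - i - 1), ρ j * c (k - j - 1) i)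
    (xbar x : ℕ → Fin n → ℝ) (v : ℕ → Fin m → ℝ) (w : ℕ → Fin p → ℝ)
    (hxbar : ∀ k, xbar (k + 1) = Ftil.mulVec (xbar k) + G.mulVec (v k) + H.mulVec (w k))
    (hx : ∀ k, x (k + 1) = Ftil.mulVec (x k) + G.mulVec (v k))
    (h0 : xbar 0 = x 0)
    (hw : ∀ k, vecEnorm (w k) ≤ φ (xbar k) (v k)) :
    ∀ k, vecEnorm (w k) ≤ φ (xbar k) (v k) ∧
      φ (xbar k) (v k) ≤ φ (x k) (v k) + ∑ i ∈ Finset.range k, c k i * φ (x i) (v i) := by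
  have hdev : ∀ k, xbar k - x k = ∑ j ∈ range k, (Ftil ^ j) *ᵥ (H *ᵥ w (k - 1 - j)) :=
    Ftil.eq_sum_pow_mulVec_of_succ (e := xbar - x) (b := fun k => H *ᵥ w k) (by simp [h0])
      fun k => by simp only [Pi.sub_apply, hxbar, hx, mulVec_sub]; abel
  refine fun k => ⟨hw k, IsVolterraResolvent.le_add_sum_mul hc hρ0
    (a := fun k => φ (xbar k) (v k)) (b := fun k => φ (x k) (v k)) (fun k => ?_) k⟩
  calc φ (xbar k) (v k)
      = vecEnorm ((Etil₁ *ᵥ x k + E₂ *ᵥ v k) + Etil₁ *ᵥ (xbar k - x k)) := by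
        rw [hφ, mulVec_sub]; abel_nf
    _ ≤ φ (x k) (v k) + vecEnorm (Etil₁ *ᵥ (xbar k - x k)) := by
        rw [hφ]; exact vecEnorm_add_le _ _
    _ ≤ φ (x k) (v k) + ∑ j ∈ range k, ρ j * φ (xbar (k - 1 - j)) (v (k - 1 - j)) := by
        rw [hdev, mulVec_sum]
        gcongr
        refine (vecEnorm_sum_le _ _).trans (sum_le_sum fun j _ => ?_)
        rw [mulVec_mulVec, mulVec_mulVec]
        exact (hρ j _).trans (mul_le_mul_of_nonneg_left (hw _) (hρ0 j))
end
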